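/- Let L be a reduced 1-compact compactly generated multiplicative lattice with the compact elements multiplicatively closed and Clique(Γᵐ(L)) < ∞. Then every minimal prime element p of L has the form p = x* for some x ∈ L. -/

import Mathlib

variable {α : Type*}

/-- Iterated product `a^n` in a multiplicative lattice (with `a^0 = ⊤`). -/
def mpow [CompleteLattice α] (mul : α → α → α) (a : α) : ℕ → α
  | 0 => ⊤
  | n + 1 => mul a (mpow mul a n)

/-- `mul` makes the complete lattice `α` into a multiplicative lattice. -/
def IsMulLattice [CompleteLattice α] (mul : α → α → α) : Prop :=
  (∀ a b : α, mul a b = mul b a) ∧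
  (∀ a b c : α, mul (mul a b) c = mul a (mul b c)) ∧
  (∀ (a : α) (s : Set α), mul a (sSup s) = ⨆ b ∈ s, mul a b) ∧
  (∀ a b : α, mul a b ≤ a ⊓ b) ∧
  (∀ a : α, mul a ⊤ = a)

/-- The multiplicative lattice is reduced: the only nilpotent element is `⊥`. -/
def LatReduced [CompleteLattice α] (mul : α → α → α) : Prop :=
  ∀ (a : α) (n : ℕ), mpow mul a (n + 1) = ⊥ → a = ⊥

/-- `a* = sup {x | x·a = 0}`. -/
def starAnn [CompleteLattice α] (mul : α → α → α) (a : α) : α :=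
  sSup {x : α | mul x a = ⊥}

/-- A prime element of a multiplicative lattice. -/
def IsPrimeElt [CompleteLattice α] (mul : α → α → α) (p : α) : Prop :=
  p ≠ ⊤ ∧ ∀ a b : α, mul a b ≤ p → a ≤ p ∨ b ≤ p

/-- The zero-divisor graph `Γᵐ(L)` of a multiplicative lattice. -/
def zdg [CompleteLattice α] (mul : α → α → α) : SimpleGraph α where
  Adj a b := a ≠ b ∧ a ≠ ⊥ ∧ b ≠ ⊥ ∧ mul a b = ⊥ ∧ mul b a = ⊥
  symm := ⟨fun a b h => ⟨h.1.symm, h.2.2.1, h.2.1, h.2.2.2.2, h.2.2.2.1⟩⟩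
  loopless := ⟨fun a h => h.1 rfl⟩

/-- `Clique(Γᵐ(L)) < ∞`. -/
def CliqueBounded [CompleteLattice α] (mul : α → α → α) : Prop :=
  ∃ N : ℕ, ∀ s : Finset α, (zdg mul).IsClique ↑s → s.card ≤ N

/-!
Zorn's lemma gives primes avoiding any multiplicatively closed set of nonzero compact elements.
Hence, in a reduced lattice, only `⊥` lies below every prime, and a compact `c` below a minimal
prime `p` satisfies `c·z = 0` for some `z ≰ p`.
For distinct minimal primes `p₁, …, pₙ` pick compact `xᵢ ≰ pᵢ` lying below every other `pⱼ`,
then `z_{ij} ≰ pⱼ` with `xᵢ·z_{ij} = 0`: the elements `yⱼ = xⱼ·∏_{i≠j} z_{ij}` are nonzero and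
pairwise annihilate, so `n` is bounded by the clique number and there are finitely many minimal
primes. If `m` is the product of the minimal primes other than `p`, then `p·m` lies below every
minimal prime, hence below every prime, so `p·m = 0`; as `m ≰ p`, primality gives `p = m*`.
-/

variable {β : Type*}

namespace IsMulLattice

variable [CompleteLattice α] {mul : α → α → α}

theorem mul_comm (hL : IsMulLattice mul) (a b : α) : mul a b = mul b a := hL.1 a b

theorem mul_assoc (hL : IsMulLattice mul) (a b c : α) : mul (mul a b) c = mul a (mul b c) :=
  hL.2.1 a b c

theorem mul_top (hL : IsMulLattice mul) (a : α) : mul a ⊤ = a := hL.2.2.2.2 a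

theorem top_mul (hL : IsMulLattice mul) (a : α) : mul ⊤ a = a := by
  rw [hL.mul_comm, hL.mul_top]

theorem mul_le_left (hL : IsMulLattice mul) (a b : α) : mul a b ≤ a :=
  (hL.2.2.2.1 a b).trans inf_le_left

theorem mul_le_right (hL : IsMulLattice mul) (a b : α) : mul a b ≤ b :=
  (hL.2.2.2.1 a b).trans inf_le_right

theorem mul_sup (hL : IsMulLattice mul) (a b c : α) : mul a (b ⊔ c) = mul a b ⊔ mul a c := by
  rw [← sSup_pair, hL.2.2.1, iSup_pair]

theorem mul_le_mul_left (hL : IsMulLattice mul) (a : α) {b c : α} (h : b ≤ c) :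
    mul a b ≤ mul a c := by
  rw [← sup_eq_right.2 h, hL.mul_sup]
  exact le_sup_left

theorem mul_le_mul (hL : IsMulLattice mul) {a b c d : α} (hac : a ≤ c) (hbd : b ≤ d) :
    mul a b ≤ mul c d :=
  calc mul a b ≤ mul a d := hL.mul_le_mul_left a hbd
    _ = mul d a := hL.mul_comm a d
    _ ≤ mul d c := hL.mul_le_mul_left d hac
    _ = mul c d := hL.mul_comm d c

theorem mul_mul_mul_comm (hL : IsMulLattice mul) (a b c d : α) :
    mul (mul a b) (mul c d) = mul (mul a c) (mul b d) := by
  rw [hL.mul_assoc, hL.mul_assoc, ← hL.mul_assoc b, ← hL.mul_assoc c, hL.mul_comm b c]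

theorem mul_sup_sup_le (hL : IsMulLattice mul) (a b c : α) :
    mul (a ⊔ b) (a ⊔ c) ≤ a ⊔ mul b c := by
  rw [hL.mul_sup, hL.mul_comm _ c, hL.mul_sup, hL.mul_comm c b]
  exact sup_le (le_sup_of_le_left (hL.mul_le_right _ _))
    (sup_le_sup_right (hL.mul_le_right _ _) _)

theorem mpow_one (hL : IsMulLattice mul) (a : α) : mpow mul a 1 = a := hL.mul_top a

theorem mpow_add (hL : IsMulLattice mul) (a : α) (m n : ℕ) :
    mpow mul a (m + n) = mul (mpow mul a m) (mpow mul a n) := by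
  induction m with
  | zero => rw [Nat.zero_add, mpow, hL.top_mul]
  | succ m ih => rw [Nat.succ_add, mpow, mpow, ih, hL.mul_assoc]

theorem mpow_mul (hL : IsMulLattice mul) (a b : α) (n : ℕ) :
    mpow mul (mul a b) n = mul (mpow mul a n) (mpow mul b n) := by
  induction n with
  | zero => exact (hL.mul_top ⊤).symm
  | succ n ih => rw [mpow, mpow, mpow, ih, hL.mul_mul_mul_comm]

theorem mpow_succ_le (hL : IsMulLattice mul) (a : α) (n : ℕ) : mpow mul a (n + 1) ≤ a :=
  hL.mul_le_left _ _

theorem mpow_succ_le_mpow (hL : IsMulLattice mul) (a : α) (n : ℕ) :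
    mpow mul a (n + 1) ≤ mpow mul a n :=
  hL.mul_le_right _ _

theorem eq_bot_of_mul_self_eq_bot (hL : IsMulLattice mul) (hred : LatReduced mul) {a : α}
    (h : mul a a = ⊥) : a = ⊥ :=
  hred a 1 (by rw [mpow, hL.mpow_one, h])

end IsMulLattice

section CompleteLattice

variable [CompleteLattice α] {mul : α → α → α}

theorem isCompactElement_mpow (htop : IsCompactElement (⊤ : α))
    (hmc : ∀ a b : α, IsCompactElement a → IsCompactElement b → IsCompactElement (mul a b))
    {a : α} (ha : IsCompactElement a) (n : ℕ) : IsCompactElement (mpow mul a n) := by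
  induction n with
  | zero => exact htop
  | succ n ih => exact hmc _ _ ha ih

theorem eq_starAnn_of_mul_eq_bot {p m : α} (hp : IsPrimeElt mul p) (hmp : ¬ m ≤ p)
    (hpm : mul p m = ⊥) : p = starAnn mul m :=
  le_antisymm (le_sSup hpm) <| sSup_le fun b hb =>
    (hp.2 b m (le_of_eq_of_le hb bot_le)).resolve_right hmp

theorem sInf_isPrimeElt_of_isChain {c : Set α} (hne : c.Nonempty) (hc : IsChain (· ≤ ·) c)
    (hprime : ∀ q ∈ c, IsPrimeElt mul q) : IsPrimeElt mul (sInf c) := by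
  obtain ⟨y, hy⟩ := hne
  refine ⟨ne_top_of_le_ne_top (hprime y hy).1 (sInf_le hy), fun a b hab => ?_⟩
  by_contra! ⟨ha, hb⟩
  obtain ⟨x₁, hx₁, hax₁⟩ : ∃ x ∈ c, ¬ a ≤ x := by
    simpa only [le_sInf_iff, not_forall, exists_prop] using ha
  obtain ⟨x₂, hx₂, hbx₂⟩ : ∃ x ∈ c, ¬ b ≤ x := by
    simpa only [le_sInf_iff, not_forall, exists_prop] using hb
  rcases hc.total hx₁ hx₂ with h | h
  · exact ((hprime x₁ hx₁).2 a b (hab.trans (sInf_le hx₁))).elim hax₁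
      fun hb₁ => hbx₂ (hb₁.trans h)
  · exact ((hprime x₂ hx₂).2 a b (hab.trans (sInf_le hx₂))).elim
      (fun ha₂ => hax₁ (ha₂.trans h)) hbx₂

theorem exists_minimal_isPrimeElt_le {r : α} (hr : IsPrimeElt mul r) :
    ∃ q, Minimal (IsPrimeElt mul) q ∧ q ≤ r := by
  obtain ⟨q, hrq, hq⟩ := zorn_le_nonempty₀ (α := αᵒᵈ) {q | IsPrimeElt mul (OrderDual.ofDual q)}
    (fun c hcS hc y hy => ⟨sSup c, sInf_isPrimeElt_of_isChain ⟨y, hy⟩ hc.symm hcS,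
      fun _ => le_sSup⟩) (OrderDual.toDual r) hr
  exact ⟨OrderDual.ofDual q, hq, hrq⟩

theorem IsMulLattice.isPrimeElt_of_maximal (hL : IsMulLattice mul) {S : Set α}
    (hSne : S.Nonempty) (hSmul : ∀ s ∈ S, ∀ t ∈ S, mul s t ∈ S) {q : α}
    (hq : Maximal (fun q => ∀ s ∈ S, ¬ s ≤ q) q) : IsPrimeElt mul q := by
  obtain ⟨s₀, hs₀⟩ := hSne
  refine ⟨fun h => hq.prop s₀ hs₀ (h ▸ le_top), fun a b hab => ?_⟩
  by_contra! ⟨ha, hb⟩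
  obtain ⟨s, hs, hsa⟩ : ∃ s ∈ S, s ≤ q ⊔ a := by
    simpa only [not_forall, not_not, exists_prop] using hq.not_prop_of_gt (left_lt_sup.2 ha)
  obtain ⟨t, ht, htb⟩ : ∃ t ∈ S, t ≤ q ⊔ b := by
    simpa only [not_forall, not_not, exists_prop] using hq.not_prop_of_gt (left_lt_sup.2 hb)
  exact hq.prop _ (hSmul s hs t ht) <|
    (hL.mul_le_mul hsa htb).trans <| (hL.mul_sup_sup_le q a b).trans (sup_le le_rfl hab)

theorem exists_maximal_forall_not_le {S : Set α} (hS : ∀ s ∈ S, IsCompactElement s)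
    (hbot : ⊥ ∉ S) : ∃ q, Maximal (fun q => ∀ s ∈ S, ¬ s ≤ q) q := by
  have hchain : ∀ c ⊆ {q : α | ∀ s ∈ S, ¬ s ≤ q}, IsChain (· ≤ ·) c → ∀ y ∈ c,
      ∃ ub ∈ {q : α | ∀ s ∈ S, ¬ s ≤ q}, ∀ z ∈ c, z ≤ ub := by
    refine fun c hcS hc y hy => ⟨sSup c, fun s hs hsc => ?_, fun _ => le_sSup⟩
    obtain ⟨x, hx, hsx⟩ := (CompleteLattice.isCompactElement_iff_le_of_directed_sSup_le α s).1
      (hS s hs) c ⟨y, hy⟩ hc.directedOn hsc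
    exact hcS hx s hs hsx
  obtain ⟨q, -, hq⟩ := zorn_le_nonempty₀ _ hchain ⊥ fun s hs hs' => hbot (le_bot_iff.1 hs' ▸ hs)
  exact ⟨q, hq⟩

theorem IsMulLattice.exists_isPrimeElt_forall_not_le (hL : IsMulLattice mul) {S : Set α}
    (hS : ∀ s ∈ S, IsCompactElement s) (hSne : S.Nonempty)
    (hSmul : ∀ s ∈ S, ∀ t ∈ S, mul s t ∈ S) (hbot : ⊥ ∉ S) :
    ∃ q, IsPrimeElt mul q ∧ ∀ s ∈ S, ¬ s ≤ q :=
  (exists_maximal_forall_not_le hS hbot).imp fun _ hq =>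
    ⟨hL.isPrimeElt_of_maximal hSne hSmul hq, hq.prop⟩

theorem IsMulLattice.card_le_of_pairwise_mul_eq_bot (hL : IsMulLattice mul)
    (hred : LatReduced mul) {N : ℕ} (hN : ∀ s : Finset α, (zdg mul).IsClique ↑s → s.card ≤ N)
    {t : Finset β} {y : β → α} (hy : ∀ i ∈ t, y i ≠ ⊥)
    (hyy : ∀ i ∈ t, ∀ j ∈ t, i ≠ j → mul (y i) (y j) = ⊥) : t.card ≤ N := by
  classical
  have hinj : Set.InjOn y t := fun i hi j hj hij => by
    by_contra hne
    have hii := hyy i hi j hj hne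
    rw [← hij] at hii
    exact hy i hi (hL.eq_bot_of_mul_self_eq_bot hred hii)
  have hclique : (zdg mul).IsClique ↑(t.image y) := by
    rw [SimpleGraph.isClique_iff, Finset.coe_image, hinj.pairwise_image]
    intro i hi j hj hij
    have hyij : y i ≠ y j := fun h => hij (hinj hi hj h)
    exact ⟨hyij, hy i hi, hy j hj, hyy i hi j hj hij, hyy j hj i hi hij.symm⟩
  exact (Finset.card_image_of_injOn hinj).symm.trans_le (hN _ hclique)

end CompleteLattice

section CompactlyGenerated

variable [CompleteLattice α] [IsCompactlyGenerated α] {mul : α → α → α}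

theorem IsMulLattice.eq_bot_of_forall_le_isPrimeElt (hL : IsMulLattice mul)
    (hred : LatReduced mul) (htop : IsCompactElement (⊤ : α))
    (hmc : ∀ a b : α, IsCompactElement a → IsCompactElement b → IsCompactElement (mul a b))
    {a : α} (ha : ∀ q, IsPrimeElt mul q → a ≤ q) : a = ⊥ := by
  refine le_bot_iff.1 <| le_iff_compact_le_imp.2 fun c hc hca => ?_
  by_contra hcb
  obtain ⟨q, hq, hcq⟩ := hL.exists_isPrimeElt_forall_not_le
    (S := {s | ∃ n, s = mpow mul c (n + 1)})
    (by rintro _ ⟨n, rfl⟩; exact isCompactElement_mpow htop hmc hc _) ⟨_, 0, rfl⟩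
    (by
      rintro _ ⟨m, rfl⟩ _ ⟨n, rfl⟩
      exact ⟨m + n + 1, by rw [← hL.mpow_add]; congr 1; omega⟩)
    (by rintro ⟨n, hn⟩; exact hcb (hred c n hn.symm).le)
  exact hcq c ⟨0, (hL.mpow_one c).symm⟩ (hca.trans (ha q hq))

theorem IsMulLattice.exists_not_le_mul_eq_bot (hL : IsMulLattice mul) (hred : LatReduced mul)
    (htop : IsCompactElement (⊤ : α))
    (hmc : ∀ a b : α, IsCompactElement a → IsCompactElement b → IsCompactElement (mul a b))
    {p : α} (hp : Minimal (IsPrimeElt mul) p) {c : α} (hc : IsCompactElement c) (hcp : c ≤ p) :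
    ∃ z, ¬ z ≤ p ∧ mul c z = ⊥ := by
  by_contra! hcz
  have hp_top : ¬ (⊤ : α) ≤ p := fun h => hp.prop.1 (top_le_iff.1 h)
  -- `S` avoids `⊥` because `c^n d = ⊥` forces `(c d)^(n+1) = ⊥`, hence `c d = ⊥`.
  obtain ⟨q, hq, hqS⟩ := hL.exists_isPrimeElt_forall_not_le
    (S := {s | ∃ n d, IsCompactElement d ∧ ¬ d ≤ p ∧ s = mul (mpow mul c n) d})
    (by rintro _ ⟨n, d, hd, -, rfl⟩; exact hmc _ _ (isCompactElement_mpow htop hmc hc n) hd)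
    ⟨_, 0, ⊤, htop, hp_top, rfl⟩
    (by
      rintro _ ⟨m, d, hd, hdp, rfl⟩ _ ⟨n, e, he, hep, rfl⟩
      refine ⟨m + n, mul d e, hmc _ _ hd he, fun hde => (hp.prop.2 d e hde).elim hdp hep, ?_⟩
      rw [hL.mul_mul_mul_comm, hL.mpow_add])
    (by
      rintro ⟨n, d, -, hdp, hnd⟩
      refine hcz d hdp (hred _ n (le_bot_iff.1 ?_))
      rw [hL.mpow_mul, hnd]
      exact hL.mul_le_mul (hL.mpow_succ_le_mpow c n) (hL.mpow_succ_le d n))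
  have hqp : q ≤ p := le_iff_compact_le_imp.2 fun e he heq => by
    by_contra hep
    exact hqS e ⟨0, e, he, hep, (hL.top_mul e).symm⟩ heq
  refine hqS c ⟨1, ⊤, htop, hp_top, ?_⟩ (hcp.trans (hp.eq_of_le hq hqp).ge)
  rw [hL.mul_top, hL.mpow_one]

theorem IsMulLattice.exists_compact_le_forall_not_le (hL : IsMulLattice mul)
    (htop : IsCompactElement (⊤ : α))
    (hmc : ∀ a b : α, IsCompactElement a → IsCompactElement b → IsCompactElement (mul a b))
    {q : α} (hq : IsPrimeElt mul q) (s : Finset β) (f : β → α) (hf : ∀ j ∈ s, ¬ f j ≤ q) :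
    ∃ x, IsCompactElement x ∧ ¬ x ≤ q ∧ ∀ j ∈ s, x ≤ f j := by
  classical
  induction s using Finset.induction_on with
  | empty => exact ⟨⊤, htop, fun h => hq.1 (top_le_iff.1 h), by simp⟩
  | insert a s _ ih =>
    obtain ⟨x, hx, hxq, hxs⟩ := ih fun j hj => hf j (Finset.mem_insert_of_mem hj)
    have hfa := hf a (Finset.mem_insert_self a s)
    rw [le_iff_compact_le_imp] at hfa
    push Not at hfa
    obtain ⟨c, hc, hca, hcq⟩ := hfa
    refine ⟨mul c x, hmc c x hc hx, fun h => (hq.2 c x h).elim hcq hxq, ?_⟩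
    rw [Finset.forall_mem_insert]
    exact ⟨(hL.mul_le_left c x).trans hca, fun j hj => (hL.mul_le_right c x).trans (hxs j hj)⟩

theorem IsMulLattice.exists_pairwise_mul_eq_bot (hL : IsMulLattice mul) (hred : LatReduced mul)
    (htop : IsCompactElement (⊤ : α))
    (hmc : ∀ a b : α, IsCompactElement a → IsCompactElement b → IsCompactElement (mul a b))
    (t : Finset α) (ht : ∀ i ∈ t, Minimal (IsPrimeElt mul) i) :
    ∃ y : α → α, (∀ j ∈ t, ¬ y j ≤ j) ∧ ∀ i ∈ t, ∀ j ∈ t, i ≠ j → mul (y i) (y j) = ⊥ := by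
  classical
  have hx : ∀ i ∈ t, ∃ x, IsCompactElement x ∧ ¬ x ≤ i ∧ ∀ j ∈ t.erase i, x ≤ j :=
    fun i hi => hL.exists_compact_le_forall_not_le htop hmc (ht i hi).prop (t.erase i) id
      fun j hj hji => Finset.ne_of_mem_erase hj
        ((ht i hi).eq_of_le (ht j (Finset.mem_of_mem_erase hj)).prop hji)
  choose! x hxc hxi hxj using hx
  have hz : ∀ i ∈ t, ∀ j ∈ t, i ≠ j → ∃ z, ¬ z ≤ j ∧ mul (x i) z = ⊥ :=
    fun i hi j hj hij => hL.exists_not_le_mul_eq_bot hred htop hmc (ht j hj) (hxc i hi)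
      (hxj i hi j (Finset.mem_erase.2 ⟨hij.symm, hj⟩))
  choose! z hzj hz using hz
  have hw : ∀ j ∈ t, ∃ w, ¬ w ≤ j ∧ ∀ i ∈ t.erase j, w ≤ z i j := fun j hj =>
    (hL.exists_compact_le_forall_not_le htop hmc (ht j hj).prop (t.erase j) (z · j)
      fun i hi => hzj i (Finset.mem_of_mem_erase hi) j hj (Finset.ne_of_mem_erase hi)).imp
      fun _ hw => hw.2
  choose! w hwj hw using hw
  refine ⟨fun j => mul (x j) (w j), fun j hj hle => ?_, fun i hi j hj hij => ?_⟩
  · exact ((ht j hj).prop.2 _ _ hle).elim (hxi j hj) (hwj j hj)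
  · refine le_bot_iff.1 <| (hL.mul_le_mul (hL.mul_le_left _ _) ?_).trans (hz i hi j hj hij).le
    exact (hL.mul_le_right _ _).trans (hw j hj i (Finset.mem_erase.2 ⟨hij, hi⟩))

theorem IsMulLattice.setOf_minimal_isPrimeElt_finite (hL : IsMulLattice mul)
    (hred : LatReduced mul) (htop : IsCompactElement (⊤ : α))
    (hmc : ∀ a b : α, IsCompactElement a → IsCompactElement b → IsCompactElement (mul a b))
    (hclique : CliqueBounded mul) : {p | Minimal (IsPrimeElt mul) p}.Finite := by
  obtain ⟨N, hN⟩ := hclique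
  by_contra hinf
  obtain ⟨t, hts, htN⟩ := Set.Infinite.exists_subset_card_eq hinf (N + 1)
  obtain ⟨y, hyt, hyy⟩ := hL.exists_pairwise_mul_eq_bot hred htop hmc t fun i hi => hts hi
  have := hL.card_le_of_pairwise_mul_eq_bot hred hN
    (fun j hj hy => hyt j hj (hy.trans_le bot_le)) hyy
  omega

end CompactlyGenerated

theorem minimal_prime_is_annihilator [CompleteLattice α] [IsCompactlyGenerated α]
    (mul : α → α → α) (hL : IsMulLattice mul) (hred : LatReduced mul)
    (htop : IsCompactElement (⊤ : α))
    (hmc : ∀ a b : α, IsCompactElement a →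
      IsCompactElement b → IsCompactElement (mul a b))
    (hclique : CliqueBounded mul) (p : α)
    (hp : IsPrimeElt mul p) (hpmin : ∀ q : α, IsPrimeElt mul q → q ≤ p → q = p) :
    ∃ x : α, p = starAnn mul x := by
  classical
  have hfin := hL.setOf_minimal_isPrimeElt_finite hred htop hmc hclique
  obtain ⟨m, -, hmp, hm⟩ := hL.exists_compact_le_forall_not_le htop hmc hp
    (hfin.toFinset.erase p) id fun q hq hqp =>
      Finset.ne_of_mem_erase hq
        (hpmin q (hfin.mem_toFinset.1 (Finset.mem_of_mem_erase hq)).prop hqp)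
  refine ⟨m, eq_starAnn_of_mul_eq_bot hp hmp ?_⟩
  refine hL.eq_bot_of_forall_le_isPrimeElt hred htop hmc fun r hr => ?_
  obtain ⟨q, hq, hqr⟩ := exists_minimal_isPrimeElt_le hr
  rcases eq_or_ne q p with rfl | hqp
  · exact (hL.mul_le_left _ _).trans hqr
  · exact (hL.mul_le_right _ _).trans <|
      (hm q (Finset.mem_erase.2 ⟨hqp, hfin.mem_toFinset.2 hq⟩)).trans hqr
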